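/- arXiv:1209.6068 — 7 statements merged into one kernel-verified Lean document; each statement's English description precedes it below -/
import Mathlib

section
/- Let H be a complex Hilbert space, M a unital *-subalgebra of the bounded operators on H, and Ω ∈ H a unit vector that is cyclic for M (i.e. {AΩ : A ∈ M} is dense in H). Let (U_t)_{t∈ℝ} be a strongly continuous one-parameter group of unitary operators on H (U_0 = 1, U_{s+t} = U_s U_t) such that U_t Ω = Ω and U_t M U_{-t} = M for all t ∈ ℝ, and suppose the generator is positive in the following sense: for all ψ, φ ∈ H there is a function G : ℂ → ℂ, bounded and continuous on the closed upper half-plane {z : Im z ≥ 0} and holomorphic on the open upper half-plane, with G(t) = ⟨ψ, U_t φ⟩ for all t ∈ ℝ. If the group is non-degenerate, i.e. every ψ ∈ H with U_t ψ = ψ for all t ∈ ℝ is a scalar multiple of Ω, then the commutant of M is trivial: every bounded operator X on H satisfying XA = AX for all A ∈ M is a scalar multiple of the identity. -/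
/-!
For `X` in the commutant of `M`, so is `star X`, and moving `U (-t) A U t ∈ M` across `star X`
shows that `g t = ⟪X Ω, U t (A Ω)⟫` satisfies `g (-t) = ⟪star A Ω, U t (star X Ω)⟫`. Positivity
of the generator thus extends `g` boundedly and holomorphically to both half-planes with common
continuous boundary values; by Morera the glued function is entire, so by Liouville `g` is
constant. Hence `X Ω` is `U`-invariant, so `X Ω = c • Ω` by non-degeneracy, and `X = c • 1` on
the dense set `M Ω`.
-/

open Complex Set

namespace Complex

variable {E : Type*} [NormedAddCommGroup E] [NormedSpace ℂ E]

theorem isConservativeOn_univ_of_differentiableOn_im_ne_zero {f : ℂ → E} (hc : Continuous f)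
    (hd : DifferentiableOn ℂ f {z | z.im ≠ 0}) : IsConservativeOn f univ := by
  have hrect : ∀ z w : ℂ, z.im = 0 ∨ w.im = 0 →
      (∫ x : ℝ in z.re..w.re, f (x + z.im * I)) - (∫ x : ℝ in z.re..w.re, f (x + w.im * I)) +
        I • (∫ y : ℝ in z.im..w.im, f (w.re + y * I)) -
        I • (∫ y : ℝ in z.im..w.im, f (z.re + y * I)) = 0 := by
    refine fun z w hzw ↦ integral_boundary_rect_eq_zero_of_continuousOn_of_differentiableOn f z w
      hc.continuousOn (hd.mono ?_)
    rintro u ⟨-, hu⟩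
    simp only [mem_preimage, mem_Ioo, min_lt_iff, lt_max_iff] at hu
    show u.im ≠ 0
    rcases hzw with h | h <;> rw [h] at hu <;> grind
  intro z w _
  rw [← add_eq_zero_iff_eq_neg, wedgeIntegral_add_wedgeIntegral_eq]
  -- cut the rectangle along the real axis; both halves have their interior off the axis
  have hlow := hrect z w.re (by simp)
  have hupp := hrect z.re w (by simp)
  simp only [ofReal_re, ofReal_im] at hlow hupp
  have hint (a c d : ℝ) :
      IntervalIntegrable (fun y : ℝ ↦ f (a + y * I)) MeasureTheory.volume c d :=
    (hc.comp (by fun_prop)).intervalIntegrable c d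
  rw [← intervalIntegral.integral_add_adjacent_intervals (hint w.re z.im 0) (hint w.re 0 w.im),
    ← intervalIntegral.integral_add_adjacent_intervals (hint z.re z.im 0) (hint z.re 0 w.im)]
  linear_combination (norm := module) hlow + hupp

theorem differentiable_of_differentiableOn_im_ne_zero [CompleteSpace E] {f : ℂ → E}
    (hc : Continuous f) (hd : DifferentiableOn ℂ f {z | z.im ≠ 0}) : Differentiable ℂ f := fun z ↦
  ((isConservativeOn_univ_of_differentiableOn_im_ne_zero hc hd).isExactOn_univ hc
    |>.differentiableOn isOpen_univ z trivial).differentiableAt Filter.univ_mem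

end Complex

def HasBoundedUpperHalfPlaneExtension (g : ℝ → ℂ) : Prop :=
  ∃ G : ℂ → ℂ, (∃ C : ℝ, ∀ z : ℂ, 0 ≤ z.im → ‖G z‖ ≤ C) ∧ ContinuousOn G {z : ℂ | 0 ≤ z.im} ∧
    DifferentiableOn ℂ G {z : ℂ | 0 < z.im} ∧ ∀ t : ℝ, G (t : ℂ) = g t

theorem HasBoundedUpperHalfPlaneExtension.apply_eq_apply {g : ℝ → ℂ}
    (h : HasBoundedUpperHalfPlaneExtension g)
    (h_neg : HasBoundedUpperHalfPlaneExtension fun t ↦ g (-t)) (s t : ℝ) : g s = g t := by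
  obtain ⟨G₁, ⟨C₁, hG₁_le⟩, hG₁_cont, hG₁_diff, hG₁_eq⟩ := h
  obtain ⟨G₂, ⟨C₂, hG₂_le⟩, hG₂_cont, hG₂_diff, hG₂_eq⟩ := h_neg
  let F : ℂ → ℂ := fun z ↦ if 0 ≤ z.im then G₁ z else G₂ (-z)
  have hF_eq (t : ℝ) : F t = g t := by simp [F, hG₁_eq]
  have hF_cont : Continuous F := by
    refine continuous_if_le continuous_const continuous_im hG₁_cont
      (hG₂_cont.comp continuous_neg.continuousOn fun z hz ↦ ?_) fun z hz ↦ ?_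
    · simpa using hz
    · rw [← re_add_im z, ← hz]
      simpa [hG₁_eq] using (hG₂_eq (-z.re)).symm
  have hF_diff : DifferentiableOn ℂ F {z | z.im ≠ 0} := by
    have hupper : IsOpen {z : ℂ | 0 < z.im} := isOpen_lt continuous_const continuous_im
    have hlower : IsOpen {z : ℂ | z.im < 0} := isOpen_lt continuous_im continuous_const
    intro z hz
    refine DifferentiableAt.differentiableWithinAt ?_
    rcases (show z.im ≠ 0 from hz).lt_or_gt with hneg | hpos
    · have hneg' : 0 < (-z).im := by simpa using hneg
      have hG₂ : DifferentiableAt ℂ (fun z ↦ G₂ (-z)) z :=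
        ((hG₂_diff _ hneg').differentiableAt (hupper.mem_nhds hneg')).comp z
          differentiableAt_id.neg
      refine hG₂.congr_of_eventuallyEq ?_
      filter_upwards [hlower.mem_nhds hneg] with u hu
      simp [F, not_le.2 hu]
    · refine ((hG₁_diff z hpos).differentiableAt (hupper.mem_nhds hpos)).congr_of_eventuallyEq ?_
      filter_upwards [hupper.mem_nhds hpos] with u hu
      simp [F, hu.le]
  have hF_bdd : Bornology.IsBounded (range F) := by
    refine isBounded_iff_forall_norm_le.2 ⟨max C₁ C₂, ?_⟩
    rintro _ ⟨z, rfl⟩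
    by_cases hz : 0 ≤ z.im
    · simpa [F, hz] using le_max_of_le_left (hG₁_le z hz)
    · simpa [F, hz] using le_max_of_le_right (hG₂_le (-z) (by simp; linarith))
  rw [← hF_eq s, ← hF_eq t]
  exact (differentiable_of_differentiableOn_im_ne_zero hF_cont hF_diff).apply_eq_apply_of_bounded
    hF_bdd _ _

section UnitaryGroup

open ContinuousLinearMap

variable {H : Type*} [NormedAddCommGroup H] [InnerProductSpace ℂ H] [CompleteSpace H]
  {U : ℝ → H →L[ℂ] H}

theorem star_eq_neg_of_mem_unitary (hU : ∀ t, U t ∈ unitary (H →L[ℂ] H)) (hU0 : U 0 = 1)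
    (hUadd : ∀ s t, U (s + t) = U s * U t) (t : ℝ) : star (U t) = U (-t) :=
  left_inv_eq_right_inv (hU t).1 (by rw [← hUadd, add_neg_cancel, hU0])

variable {M : Set (H →L[ℂ] H)} {Ω : H}

theorem inner_star_apply_comm_of_mem_centralizer {Y A : H →L[ℂ] H} (hY : Y ∈ M.centralizer)
    (hA : A ∈ M) (hstar : ∀ t, star (U t) = U (-t)) (hUΩ : ∀ t, U t Ω = Ω)
    (hUM : ∀ t, ∀ B ∈ M, U t * B * U (-t) ∈ M) (t : ℝ) :
    inner ℂ (star Y Ω) (U (-t) (A Ω)) = inner ℂ (star A Ω) (U t (Y Ω)) := by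
  set B := U (-t) * A * U t
  have hB : B ∈ M := by simpa using hUM (-t) A hA
  have hBΩ : B Ω = U (-t) (A Ω) := by simp [B, hUΩ]
  have hstarBΩ : star B Ω = U (-t) (star A Ω) := by
    simp [B, star_mul, hstar, hUΩ]
  calc inner ℂ (star Y Ω) (U (-t) (A Ω))
      = inner ℂ Ω ((Y * B) Ω) := by
        rw [star_eq_adjoint, adjoint_inner_left, mul_apply_eq_comp, hBΩ]
    _ = inner ℂ Ω ((B * Y) Ω) := by rw [hY B hB]
    _ = inner ℂ (U (-t) (star A Ω)) (Y Ω) := by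
        rw [← hstarBΩ, star_eq_adjoint, adjoint_inner_left, mul_apply_eq_comp]
    _ = inner ℂ (star A Ω) (U t (Y Ω)) := by
        rw [show U (-t) = star (U t) from (hstar t).symm, star_eq_adjoint, adjoint_inner_left]

theorem apply_star_apply_eq_of_mem_centralizer {Y : H →L[ℂ] H} (hY : Y ∈ M.centralizer)
    (hcyc : Dense {ψ : H | ∃ A ∈ M, ψ = A Ω}) (hU0 : U 0 = 1)
    (hstar : ∀ t, star (U t) = U (-t)) (hUΩ : ∀ t, U t Ω = Ω)
    (hUM : ∀ t, ∀ B ∈ M, U t * B * U (-t) ∈ M)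
    (hpos : ∀ ψ φ : H, HasBoundedUpperHalfPlaneExtension fun t ↦ inner ℂ ψ (U t φ)) (s : ℝ) :
    U s (star Y Ω) = star Y Ω := by
  refine hcyc.eq_of_inner_left ℂ ?_
  rintro _ ⟨A, hA, rfl⟩
  let g t := inner ℂ (star Y Ω) (U t (A Ω))
  have hg_neg : (fun t ↦ g (-t)) = fun t ↦ inner ℂ (star A Ω) (U t (Y Ω)) :=
    funext (inner_star_apply_comm_of_mem_centralizer hY hA hstar hUΩ hUM)
  calc inner ℂ (U s (star Y Ω)) (A Ω)
      = g (-s) := by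
        rw [show U s = star (U (-s)) by rw [hstar, neg_neg], star_eq_adjoint, adjoint_inner_left]
    _ = g 0 := (hpos _ _).apply_eq_apply (hg_neg ▸ hpos _ _) (-s) 0
    _ = inner ℂ (star Y Ω) (A Ω) := by simp [g, hU0]

end UnitaryGroup

theorem nondegenerate_ground_commutant_trivial_general
    {H : Type*} [NormedAddCommGroup H] [InnerProductSpace ℂ H] [CompleteSpace H]
    (M : StarSubalgebra ℂ (H →L[ℂ] H))
    (Ω : H)
    (hcyc : Dense {ψ : H | ∃ A ∈ M, ψ = A Ω})
    (U : ℝ → (H →L[ℂ] H))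
    (hUunitary : ∀ t : ℝ, U t ∈ unitary (H →L[ℂ] H))
    (hU0 : U 0 = 1)
    (hUadd : ∀ s t : ℝ, U (s + t) = U s * U t)
    (hUΩ : ∀ t : ℝ, U t Ω = Ω)
    (hUM : ∀ t : ℝ, (fun A => U t * A * U (-t)) '' (M : Set (H →L[ℂ] H)) = M)
    (hpos : ∀ ψ φ : H, ∃ G : ℂ → ℂ,
      (∃ C : ℝ, ∀ z : ℂ, 0 ≤ z.im → ‖G z‖ ≤ C) ∧
      ContinuousOn G {z : ℂ | 0 ≤ z.im} ∧
      DifferentiableOn ℂ G {z : ℂ | 0 < z.im} ∧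
      ∀ t : ℝ, G (t : ℂ) = (inner ℂ ψ (U t φ) : ℂ))
    (hnondeg : ∀ ψ : H, (∀ t : ℝ, U t ψ = ψ) → ∃ c : ℂ, ψ = c • Ω) :
    ∀ X : H →L[ℂ] H, (∀ A ∈ M, X * A = A * X) → ∃ c : ℂ, X = c • (1 : H →L[ℂ] H) := by
  intro X hX
  have hX_star : star X ∈ (M : Set (H →L[ℂ] H)).centralizer :=
    Set.star_mem_centralizer' (fun _ ↦ star_mem) fun A hA ↦ (hX A hA).symm
  have hconj_mem (t : ℝ) (B : H →L[ℂ] H) (hB : B ∈ M) : U t * B * U (-t) ∈ M :=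
    (hUM t).subset ⟨B, hB, rfl⟩
  obtain ⟨c, hc⟩ := hnondeg (X Ω) fun t ↦ by
    simpa using apply_star_apply_eq_of_mem_centralizer hX_star hcyc hU0
      (star_eq_neg_of_mem_unitary hUunitary hU0 hUadd) hUΩ hconj_mem hpos t
  refine ⟨c, ContinuousLinearMap.ext_on (hcyc.mono Submodule.subset_span) ?_⟩
  rintro _ ⟨A, hA, rfl⟩
  simp [← mul_apply_eq_comp, hX A hA, hc]

/-- Borchers' theorem in representation form: a non-degenerate invariant strongly continuous
unitary group with positive generator (encoded by holomorphic extension of matrix elements to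
the upper half-plane) and invariant cyclic unit vector forces the commutant of the invariant
unital *-algebra `M` to be trivial. -/
theorem nondegenerate_ground_commutant_trivial
    {H : Type*} [NormedAddCommGroup H] [InnerProductSpace ℂ H] [CompleteSpace H]
    (M : StarSubalgebra ℂ (H →L[ℂ] H))
    (Ω : H) (hΩnorm : ‖Ω‖ = 1)
    (hcyc : Dense {ψ : H | ∃ A ∈ M, ψ = A Ω})
    (U : ℝ → (H →L[ℂ] H))
    (hUunitary : ∀ t : ℝ, U t ∈ unitary (H →L[ℂ] H))
    (hU0 : U 0 = 1)
    (hUadd : ∀ s t : ℝ, U (s + t) = U s * U t)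
    (hUcont : ∀ ψ : H, Continuous fun t : ℝ => U t ψ)
    (hUΩ : ∀ t : ℝ, U t Ω = Ω)
    (hUM : ∀ t : ℝ, (fun A => U t * A * U (-t)) '' (M : Set (H →L[ℂ] H)) = M)
    (hpos : ∀ ψ φ : H, ∃ G : ℂ → ℂ,
      (∃ C : ℝ, ∀ z : ℂ, 0 ≤ z.im → ‖G z‖ ≤ C) ∧
      ContinuousOn G {z : ℂ | 0 ≤ z.im} ∧
      DifferentiableOn ℂ G {z : ℂ | 0 < z.im} ∧
      ∀ t : ℝ, G (t : ℂ) = (inner ℂ ψ (U t φ) : ℂ))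
    (hnondeg : ∀ ψ : H, (∀ t : ℝ, U t ψ = ψ) → ∃ c : ℂ, ψ = c • Ω) :
    ∀ X : H →L[ℂ] H, (∀ A ∈ M, X * A = A * X) → ∃ c : ℂ, X = c • (1 : H →L[ℂ] H) :=
  nondegenerate_ground_commutant_trivial_general M Ω hcyc U hUunitary hU0 hUadd hUΩ hUM hpos hnondeg
end

section
/- Let 𝔄 be a unital complex *-algebra, ω a state on 𝔄, α a one-parameter group of *-automorphisms of 𝔄, and β > 0. If ω satisfies the β-KMS condition with respect to α, then ω is invariant under the time evolution: ω(α_t(B)) = ω(B) for all B ∈ 𝔄 and all t ∈ ℝ. -/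
/-!
Gluing the two edges of the strip, the KMS function `F` of the pair `(1, B)` becomes a bounded
`iβ`-periodic function on `ℂ`. It is continuous, and holomorphic off the lines `im z ∈ βℤ`, so
Morera's theorem makes it entire and Liouville's theorem constant; on the real axis it is
`t ↦ ω(α_t B)`.
-/

open Complex Set MeasureTheory
open scoped Interval

namespace Complex

section Gluing

variable {E : Type*} [NormedAddCommGroup E] [NormedSpace ℂ E] {f : ℂ → E} {a b c : ℝ}

theorem wedgeIntegral_add_wedgeIntegral_eq_zero_of_notMem_Ioo
    (hf : ContinuousOn f (im ⁻¹' Ioo a b))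
    (hd : DifferentiableOn ℂ f (im ⁻¹' Ioo a b \ im ⁻¹' {c})) {z w : ℂ}
    (hzw : [[z.im, w.im]] ⊆ Ioo a b) (hc : c ∉ Ioo (min z.im w.im) (max z.im w.im)) :
    wedgeIntegral z w f + wedgeIntegral w z f = 0 := by
  rw [wedgeIntegral_add_wedgeIntegral_eq]
  refine integral_boundary_rect_eq_zero_of_continuousOn_of_differentiableOn f z w
    (hf.mono fun x hx => hzw (mem_reProdIm.1 hx).2) (hd.mono fun x hx => ?_)
  obtain ⟨-, hxim⟩ := mem_reProdIm.1 hx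
  exact ⟨hzw (Ioo_subset_Icc_self hxim), fun h => hc (by rwa [← h])⟩

theorem isConservativeOn_of_differentiableOn_off_line (hc : c ∈ Ioo a b)
    (hf : ContinuousOn f (im ⁻¹' Ioo a b))
    (hd : DifferentiableOn ℂ f (im ⁻¹' Ioo a b \ im ⁻¹' {c})) :
    IsConservativeOn f (im ⁻¹' Ioo a b) := by
  intro z w hzw
  rw [← add_eq_zero_iff_eq_neg]
  have hz : z.im ∈ Ioo a b := (hzw (mem_reProdIm.2 ⟨left_mem_uIcc, left_mem_uIcc⟩) :)
  have hw : w.im ∈ Ioo a b := (hzw (mem_reProdIm.2 ⟨right_mem_uIcc, right_mem_uIcc⟩) :)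
  have hsub {y₁ y₂ : ℝ} (h₁ : y₁ ∈ Ioo a b) (h₂ : y₂ ∈ Ioo a b) : [[y₁, y₂]] ⊆ Ioo a b :=
    ordConnected_Ioo.uIcc_subset h₁ h₂
  have hint (x : ℝ) {y₁ y₂ : ℝ} (h₁ : y₁ ∈ Ioo a b) (h₂ : y₂ ∈ Ioo a b) :
      IntervalIntegrable (fun y : ℝ => f (x + y * I)) volume y₁ y₂ :=
    (hf.comp (by fun_prop) fun y hy => by simpa using hsub h₁ h₂ hy).intervalIntegrable
  have hend {y : ℝ} : c ∉ Ioo (min y c) (max y c) := fun h => by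
    simp only [mem_Ioo, min_lt_iff, lt_max_iff, lt_self_iff_false, or_false] at h
    exact lt_asymm h.1 h.2
  -- cut the rectangle along the line `im = c` into two rectangles having it as an edge
  have hlow := wedgeIntegral_add_wedgeIntegral_eq_zero_of_notMem_Ioo hf hd
    (z := z) (w := w.re + c * I) (by simpa using hsub hz hc) (by simpa using hend)
  have hhigh := wedgeIntegral_add_wedgeIntegral_eq_zero_of_notMem_Ioo hf hd
    (z := z.re + c * I) (w := w) (by simpa using hsub hc hw)
    (by simpa [min_comm, max_comm] using hend)
  rw [wedgeIntegral_add_wedgeIntegral_eq] at hlow hhigh ⊢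
  simp only [add_re, ofReal_re, mul_re, I_re, mul_zero, ofReal_im, I_im, mul_one, sub_self,
    add_zero, add_im, mul_im, zero_add] at hlow hhigh
  rw [← intervalIntegral.integral_add_adjacent_intervals (hint w.re hz hc) (hint w.re hc hw),
    ← intervalIntegral.integral_add_adjacent_intervals (hint z.re hz hc) (hint z.re hc hw)]
  refine Eq.trans ?_ ((congrArg₂ (· + ·) hlow hhigh).trans (add_zero 0))
  simp only [smul_add]
  abel

theorem differentiableOn_of_differentiableOn_off_line [CompleteSpace E] (hc : c ∈ Ioo a b)
    (hf : ContinuousOn f (im ⁻¹' Ioo a b))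
    (hd : DifferentiableOn ℂ f (im ⁻¹' Ioo a b \ im ⁻¹' {c})) :
    DifferentiableOn ℂ f (im ⁻¹' Ioo a b) :=
  (isConservativeOn_and_continuousOn_iff_isDifferentiableOn
    (isOpen_Ioo.preimage continuous_im)).1
    ⟨isConservativeOn_of_differentiableOn_off_line hc hf hd, hf⟩

end Gluing

section Periodization

variable {X : Type*} {β : ℝ} {g : ℂ → X}

noncomputable def stripPeriodization (hβ : 0 < β) (g : ℂ → X) (z : ℂ) : X :=
  g (z.re + toIcoMod hβ 0 z.im * I)

theorem stripPeriodization_of_mem_Ico (hβ : 0 < β) {z : ℂ} (hz : z.im ∈ Ico 0 β) :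
    stripPeriodization hβ g z = g z := by
  rw [stripPeriodization, (toIcoMod_eq_self hβ).2 (by simpa using hz), re_add_im]

theorem periodic_stripPeriodization (hβ : 0 < β) :
    Function.Periodic (stripPeriodization hβ g) (β * I) := by
  intro z
  simp [stripPeriodization, toIcoMod_add_right]

theorem stripPeriodization_of_mem_Ico_neg (hβ : 0 < β) {z : ℂ} (hz : z.im ∈ Ico (-β) 0) :
    stripPeriodization hβ g z = g (z + β * I) := by
  rw [← periodic_stripPeriodization hβ z, stripPeriodization_of_mem_Ico]
  simp only [add_im, mul_im, ofReal_re, I_im, mul_one, ofReal_im, I_re, mul_zero, add_zero]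
  constructor <;> linarith [hz.1, hz.2]

theorem stripPeriodization_eqOn (hβ : 0 < β) (hper : ∀ t : ℝ, g (t + β * I) = g t) :
    EqOn (stripPeriodization hβ g) g (im ⁻¹' Icc 0 β) := by
  intro z hz
  rcases eq_or_lt_of_le (hz : z.im ∈ Icc 0 β).2 with htop | hlt
  · have hz : z = z.re + β * I := by rw [← htop, re_add_im]
    rw [hz, periodic_stripPeriodization, hper, stripPeriodization_of_mem_Ico]
    simp [hβ]
  · exact stripPeriodization_of_mem_Ico hβ ⟨hz.1, hlt⟩

theorem continuousOn_stripPeriodization [TopologicalSpace X] (hβ : 0 < β)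
    (hcont : ContinuousOn g (im ⁻¹' Icc 0 β)) (hper : ∀ t : ℝ, g (t + β * I) = g t) :
    ContinuousOn (stripPeriodization hβ g) (im ⁻¹' Ioo (-β) β) := by
  set H : ℂ → X := fun z => if 0 ≤ z.im then g z else g (z + β * I)
  have hGH : EqOn (stripPeriodization hβ g) H (im ⁻¹' Ioo (-β) β) := by
    intro z hz
    by_cases h : 0 ≤ z.im
    · simp only [H, if_pos h]
      exact stripPeriodization_of_mem_Ico hβ ⟨h, hz.2⟩
    · simp only [H, if_neg h]
      exact stripPeriodization_of_mem_Ico_neg hβ ⟨hz.1.le, not_le.1 h⟩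
  refine ContinuousOn.congr (ContinuousOn.if (fun z hz => ?_) (hcont.mono ?_)
    (hcont.comp (continuous_add_const _).continuousOn ?_)) hGH
  · have h0 : 0 = z.im := frontier_le_subset_eq continuous_const continuous_im hz.2
    have hre : z = z.re := ext rfl (by simp [← h0])
    rw [hre]
    exact (hper z.re).symm
  · rintro z ⟨hzV, hz⟩
    rw [closure_le_eq continuous_const continuous_im] at hz
    exact ⟨hz, hzV.2.le⟩
  · rintro z ⟨hzV, hz⟩
    simp only [not_le] at hz
    have : z.im ≤ 0 := closure_lt_subset_le continuous_im continuous_const hz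
    simp only [mem_preimage, add_im, mul_im, ofReal_re, I_im, mul_one, ofReal_im, I_re, mul_zero,
      add_zero, mem_Icc]
    constructor <;> linarith [hzV.1]

variable {E : Type*} [NormedAddCommGroup E] [NormedSpace ℂ E] {f : ℂ → E}

theorem differentiableOn_stripPeriodization_off_line (hβ : 0 < β)
    (hdiff : DifferentiableOn ℂ f (im ⁻¹' Ioo 0 β)) :
    DifferentiableOn ℂ (stripPeriodization hβ f) (im ⁻¹' Ioo (-β) β \ im ⁻¹' {0}) := by
  have hopen {s t : ℝ} : IsOpen (im ⁻¹' Ioo s t) := isOpen_Ioo.preimage continuous_im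
  rintro z ⟨hzV, hz0 : z.im ≠ 0⟩
  refine DifferentiableAt.differentiableWithinAt ?_
  rcases hz0.lt_or_gt with hneg | hpos
  · have hshift : z + β * I ∈ im ⁻¹' Ioo 0 β := by
      simp only [mem_preimage, add_im, mul_im, ofReal_re, I_im, mul_one, ofReal_im, I_re,
        mul_zero, add_zero, mem_Ioo]
      constructor <;> linarith [hzV.1]
    refine (DifferentiableAt.comp (f := fun w => w + β * I) z
      (hdiff.differentiableAt (hopen.mem_nhds hshift)) (by fun_prop)).congr_of_eventuallyEq ?_
    filter_upwards [hopen.mem_nhds ⟨hzV.1, hneg⟩] with w hw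
    exact stripPeriodization_of_mem_Ico_neg hβ ⟨hw.1.le, hw.2⟩
  · refine (hdiff.differentiableAt (hopen.mem_nhds ⟨hpos, hzV.2⟩)).congr_of_eventuallyEq ?_
    filter_upwards [hopen.mem_nhds ⟨hpos, hzV.2⟩] with w hw
    exact stripPeriodization_of_mem_Ico hβ ⟨hw.1.le, hw.2⟩

theorem differentiable_stripPeriodization [CompleteSpace E] (hβ : 0 < β)
    (hcont : ContinuousOn f (im ⁻¹' Icc 0 β)) (hdiff : DifferentiableOn ℂ f (im ⁻¹' Ioo 0 β))
    (hper : ∀ t : ℝ, f (t + β * I) = f t) :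
    Differentiable ℂ (stripPeriodization hβ f) := by
  have hV := differentiableOn_of_differentiableOn_off_line (by simp [hβ])
    (continuousOn_stripPeriodization hβ hcont hper)
    (differentiableOn_stripPeriodization_off_line hβ hdiff)
  intro z
  set n := toIcoDiv hβ 0 z.im
  have hmem : z - n • (β * I) ∈ im ⁻¹' Ioo (-β) β := by
    have := toIcoMod_mem_Ico' hβ z.im
    rw [← self_sub_toIcoDiv_zsmul] at this
    simp only [mem_preimage, zsmul_eq_mul, sub_im, mul_im, intCast_re, ofReal_re, I_im, mul_one,
      ofReal_im, I_re, mul_zero, add_zero, intCast_im, zero_mul] at this ⊢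
    constructor <;> linarith [this.1, this.2]
  have := (hV.differentiableAt ((isOpen_Ioo.preimage continuous_im).mem_nhds hmem)).comp z
    (by fun_prop : DifferentiableAt ℂ (fun u => u - n • (β * I)) z)
  simpa only [Function.comp_def, (periodic_stripPeriodization hβ).sub_zsmul_eq] using this

theorem apply_eq_apply_of_bounded_of_periodic_strip [CompleteSpace E] (hβ : 0 < β)
    (hbdd : ∃ C, ∀ z ∈ im ⁻¹' Icc 0 β, ‖f z‖ ≤ C) (hcont : ContinuousOn f (im ⁻¹' Icc 0 β))
    (hdiff : DifferentiableOn ℂ f (im ⁻¹' Ioo 0 β)) (hper : ∀ t : ℝ, f (t + β * I) = f t)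
    {z w : ℂ} (hz : z ∈ im ⁻¹' Icc 0 β) (hw : w ∈ im ⁻¹' Icc 0 β) : f z = f w := by
  obtain ⟨C, hC⟩ := hbdd
  have hbounded : Bornology.IsBounded (range (stripPeriodization hβ f)) := by
    refine isBounded_iff_forall_norm_le.2 ⟨C, forall_mem_range.2 fun u => hC _ ?_⟩
    simpa using Ico_subset_Icc_self (toIcoMod_mem_Ico' hβ u.im)
  rw [← stripPeriodization_eqOn hβ hper hz, ← stripPeriodization_eqOn hβ hper hw]
  exact (differentiable_stripPeriodization hβ hcont hdiff hper).apply_eq_apply_of_bounded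
    hbounded z w

end Periodization

end Complex

theorem kms_state_is_invariant_general
    {A : Type*} [Ring A] [Algebra ℂ A] [StarRing A]
    (ω : A →ₗ[ℂ] ℂ)
    (α : ℝ → (A ≃⋆ₐ[ℂ] A))
    (hα0 : ∀ a : A, α 0 a = a)
    (β : ℝ) (hβ : 0 < β)
    (hKMS : ∀ a b : A, ∃ F : ℂ → ℂ,
      (∃ C : ℝ, ∀ z : ℂ, 0 ≤ z.im → z.im ≤ β → ‖F z‖ ≤ C) ∧
      ContinuousOn F {z : ℂ | 0 ≤ z.im ∧ z.im ≤ β} ∧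
      DifferentiableOn ℂ F {z : ℂ | 0 < z.im ∧ z.im < β} ∧
      (∀ t : ℝ, F (t : ℂ) = ω (a * α t b)) ∧
      (∀ t : ℝ, F ((t : ℂ) + (β : ℂ) * Complex.I) = ω (α t b * a))) :
    ∀ (b : A) (t : ℝ), ω (α t b) = ω b := by
  intro b t
  obtain ⟨F, ⟨C, hC⟩, hcont, hdiff, hF0, hFβ⟩ := hKMS 1 b
  have hper (s : ℝ) : F (s + β * I) = F s := by rw [hFβ, hF0, mul_one, one_mul]
  have hreal (s : ℝ) : (s : ℂ) ∈ im ⁻¹' Icc 0 β := by simp [hβ.le]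
  calc ω (α t b) = F t := by rw [hF0, one_mul]
    _ = F (0 : ℝ) := apply_eq_apply_of_bounded_of_periodic_strip hβ
        ⟨C, fun z hz => hC z hz.1 hz.2⟩ hcont hdiff hper (hreal t) (hreal 0)
    _ = ω b := by rw [hF0, hα0, one_mul]

/-- A β-KMS state on a unital complex *-algebra is invariant under the one-parameter group of
*-automorphisms: `ω(α_t(B)) = ω(B)`. -/
theorem kms_state_is_invariant
    {A : Type*} [Ring A] [Algebra ℂ A] [StarRing A]
    (ω : A →ₗ[ℂ] ℂ)
    (hω1 : ω 1 = 1)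
    (hωpos : ∀ a : A, ∃ r : ℝ, 0 ≤ r ∧ ω (star a * a) = (r : ℂ))
    (α : ℝ → (A ≃⋆ₐ[ℂ] A))
    (hα0 : ∀ a : A, α 0 a = a)
    (hαadd : ∀ (s t : ℝ) (a : A), α (s + t) a = α s (α t a))
    (β : ℝ) (hβ : 0 < β)
    (hKMS : ∀ a b : A, ∃ F : ℂ → ℂ,
      (∃ C : ℝ, ∀ z : ℂ, 0 ≤ z.im → z.im ≤ β → ‖F z‖ ≤ C) ∧
      ContinuousOn F {z : ℂ | 0 ≤ z.im ∧ z.im ≤ β} ∧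
      DifferentiableOn ℂ F {z : ℂ | 0 < z.im ∧ z.im < β} ∧
      (∀ t : ℝ, F (t : ℂ) = ω (a * α t b)) ∧
      (∀ t : ℝ, F ((t : ℂ) + (β : ℂ) * Complex.I) = ω (α t b * a))) :
    ∀ (b : A) (t : ℝ), ω (α t b) = ω b :=
  kms_state_is_invariant_general ω α hα0 β hβ hKMS
end

section
/- Let 𝔄 be a commutative unital complex *-algebra, ω a state on 𝔄, α a one-parameter group of *-automorphisms of 𝔄, and β > 0. If ω satisfies the β-KMS condition with respect to α, then ω(A·α_t(B)) = ω(A·B) for all A, B ∈ 𝔄 and all t ∈ ℝ. -/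
/-!
Commutativity makes the two boundary values of the KMS function `F` of `a, b` coincide:
`F (t + iβ) = ω (α_t b * a) = ω (a * α_t b) = F t`. Gluing the translates of `F` by the
multiples of `iβ` therefore gives a continuous function on `ℂ`, holomorphic off the lines
`Im z ∈ βℤ`. It is entire by Morera's theorem (a rectangle integral vanishes once the rectangle
is cut along such a line), and bounded, hence constant by Liouville's theorem.
-/

open Complex Set Function Bornology MeasureTheory Topology
open scoped Interval

namespace Complex

lemma im_add_ofReal_mul_I (z : ℂ) (b : ℝ) : (z + b * I).im = z.im + b := by simp

lemma preimage_im_Ioo_mem_nhds {a b : ℝ} {z : ℂ} (h : z.im ∈ Ioo a b) :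
    im ⁻¹' Ioo a b ∈ 𝓝 z :=
  (isOpen_Ioo.preimage continuous_im).mem_nhds h

section Morera

variable {E : Type*} [NormedAddCommGroup E]

lemma intervalIntegrable_of_continuousOn_rectangle {f : ℂ → E} {z w : ℂ}
    (hf : ContinuousOn f (Rectangle z w)) {r : ℝ} (hr : r ∈ [[z.re, w.re]]) :
    IntervalIntegrable (fun y : ℝ => f (r + y * I)) volume z.im w.im :=
  (hf.comp (by fun_prop : Continuous fun y : ℝ => (r : ℂ) + y * I).continuousOn
    fun y hy => ⟨by simpa using hr, by simpa using hy⟩).intervalIntegrable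

variable [NormedSpace ℂ E]

lemma wedgeIntegral_add_wedgeIntegral_eq_add_of_mem_uIcc {f : ℂ → E} {z w : ℂ}
    (hf : ContinuousOn f (Rectangle z w)) {m : ℝ} (hm : m ∈ [[z.im, w.im]]) :
    wedgeIntegral z w f + wedgeIntegral w z f =
      (wedgeIntegral z (w.re + m * I) f + wedgeIntegral (w.re + m * I) z f) +
        (wedgeIntegral (z.re + m * I) w f + wedgeIntegral w (z.re + m * I) f) := by
  have hz := intervalIntegrable_of_continuousOn_rectangle hf left_mem_uIcc
  have hw := intervalIntegrable_of_continuousOn_rectangle hf right_mem_uIcc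
  have hzm := uIcc_subset_uIcc_left hm
  have hmw := uIcc_subset_uIcc_right hm
  simp only [wedgeIntegral_add_wedgeIntegral_eq, add_re, add_im, ofReal_re, ofReal_im, mul_re,
    mul_im, I_re, I_im, mul_zero, mul_one, sub_zero, zero_add, add_zero]
  rw [← intervalIntegral.integral_add_adjacent_intervals (hz.mono_set hzm) (hz.mono_set hmw),
    ← intervalIntegral.integral_add_adjacent_intervals (hw.mono_set hzm) (hw.mono_set hmw)]
  rw [smul_add, smul_add]
  abel

lemma wedgeIntegral_add_wedgeIntegral_eq_zero_of_notMem_uIoo {f : ℂ → E} {U : Set ℂ}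
    {y₀ : ℝ} (hc : ContinuousOn f U) (hd : DifferentiableOn ℂ f (U \ im ⁻¹' {y₀}))
    {z w : ℂ} (hU : Rectangle z w ⊆ U) (hy₀ : y₀ ∉ uIoo z.im w.im) :
    wedgeIntegral z w f + wedgeIntegral w z f = 0 := by
  rw [wedgeIntegral_add_wedgeIntegral_eq]
  refine integral_boundary_rect_eq_zero_of_continuousOn_of_differentiableOn f z w (hc.mono hU)
    (hd.mono ?_)
  rintro u ⟨hre, him⟩
  exact ⟨hU ⟨Ioo_subset_Icc_self hre, Ioo_subset_Icc_self him⟩,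
    fun h : u.im = y₀ => hy₀ (h ▸ him)⟩

lemma isConservativeOn_of_differentiableOn_diff_im_preimage {f : ℂ → E} {U : Set ℂ}
    {y₀ : ℝ} (hc : ContinuousOn f U) (hd : DifferentiableOn ℂ f (U \ im ⁻¹' {y₀})) :
    IsConservativeOn f U := by
  intro z w hU
  rw [← add_eq_zero_iff_eq_neg]
  by_cases hy₀ : y₀ ∈ [[z.im, w.im]]
  · have hlow : Rectangle z (w.re + y₀ * I) ⊆ U := by
      rintro u ⟨hre, him⟩
      exact hU ⟨by simpa using hre, uIcc_subset_uIcc_left hy₀ (by simpa using him)⟩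
    have hupp : Rectangle (z.re + y₀ * I) w ⊆ U := by
      rintro u ⟨hre, him⟩
      exact hU ⟨by simpa using hre, uIcc_subset_uIcc_right hy₀ (by simpa using him)⟩
    rw [wedgeIntegral_add_wedgeIntegral_eq_add_of_mem_uIcc (hc.mono hU) hy₀,
      wedgeIntegral_add_wedgeIntegral_eq_zero_of_notMem_uIoo hc hd hlow (by simp),
      wedgeIntegral_add_wedgeIntegral_eq_zero_of_notMem_uIoo hc hd hupp (by simp), add_zero]
  · exact wedgeIntegral_add_wedgeIntegral_eq_zero_of_notMem_uIoo hc hd hU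
      fun h => hy₀ (uIoo_subset_uIcc_self h)

theorem differentiableOn_of_differentiableOn_diff_im_preimage [CompleteSpace E] {f : ℂ → E}
    {U : Set ℂ} (hU : IsOpen U) {y₀ : ℝ} (hc : ContinuousOn f U)
    (hd : DifferentiableOn ℂ f (U \ im ⁻¹' {y₀})) :
    DifferentiableOn ℂ f U :=
  (isConservativeOn_and_continuousOn_iff_isDifferentiableOn hU).1
    ⟨isConservativeOn_of_differentiableOn_diff_im_preimage hc hd, hc⟩

lemma exists_int_im_sub_mul_mem_Ico {β : ℝ} (hβ : 0 < β) (z : ℂ) :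
    ∃ n : ℤ, (z - n * (β * I)).im ∈ Ico 0 β := by
  refine ⟨toIcoDiv hβ 0 z.im, ?_⟩
  simpa [zsmul_eq_mul] using sub_toIcoDiv_zsmul_mem_Ico hβ 0 z.im

theorem _root_.Function.Periodic.differentiable_of_differentiableOn_im_preimage_Ioo
    {g : ℂ → E} {β : ℝ} (hβ : 0 < β) (hg : Periodic g (β * I))
    (hd : DifferentiableOn ℂ g (im ⁻¹' Ioo (-β) β)) :
    Differentiable ℂ g := by
  intro z
  obtain ⟨n, hn0, hnβ⟩ := exists_int_im_sub_mul_mem_Ico hβ z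
  have hshift : g = fun w => g (w - n * (β * I)) := funext fun w => (hg.sub_int_mul_eq n).symm
  rw [hshift]
  exact (hd.differentiableAt (preimage_im_Ioo_mem_nhds ⟨by linarith, hnβ⟩)).comp z
    (differentiableAt_id.sub_const _)

end Morera

section Extension

variable {E : Type*} {β : ℝ} (hβ : 0 < β)

noncomputable def stripPeriodicExtension (F : ℂ → E) (z : ℂ) : E :=
  F (z.re + toIcoMod hβ 0 z.im * I)

lemma stripPeriodicExtension_periodic (F : ℂ → E) :
    Periodic (stripPeriodicExtension hβ F) (β * I) := by
  intro z
  simp [stripPeriodicExtension, toIcoMod_add_right]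

lemma range_stripPeriodicExtension_subset (F : ℂ → E) :
    range (stripPeriodicExtension hβ F) ⊆ F '' (im ⁻¹' Icc 0 β) := by
  rintro _ ⟨z, rfl⟩
  obtain ⟨h0, hβ'⟩ := toIcoMod_mem_Ico hβ 0 z.im
  exact ⟨_, by simpa using ⟨h0, by linarith⟩, rfl⟩

lemma stripPeriodicExtension_eqOn {F : ℂ → E} (hper : ∀ t : ℝ, F (t + β * I) = F t) :
    EqOn (stripPeriodicExtension hβ F) F (im ⁻¹' Icc 0 β) := by
  rintro z ⟨h0, hle⟩
  rcases hle.lt_or_eq with hlt | heq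
  · rw [stripPeriodicExtension, (toIcoMod_eq_self hβ).2 ⟨h0, by simpa using hlt⟩, re_add_im]
  · have hmod : toIcoMod hβ 0 β = 0 := by simpa using toIcoMod_apply_right hβ (0 : ℝ)
    calc stripPeriodicExtension hβ F z = F z.re := by simp [stripPeriodicExtension, heq, hmod]
      _ = F (z.re + β * I) := (hper z.re).symm
      _ = F z := by rw [← heq, re_add_im]

lemma stripPeriodicExtension_eqOn_add {F : ℂ → E} (hper : ∀ t : ℝ, F (t + β * I) = F t) :
    EqOn (stripPeriodicExtension hβ F) (fun z => F (z + β * I)) (im ⁻¹' Icc (-β) 0) := by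
  rintro z ⟨hβz, hz0⟩
  rw [← stripPeriodicExtension_periodic hβ F z]
  exact stripPeriodicExtension_eqOn hβ hper ⟨by rw [im_add_ofReal_mul_I]; linarith, by simpa⟩

end Extension

variable {E : Type*} [NormedAddCommGroup E] [NormedSpace ℂ E] [CompleteSpace E] {β : ℝ}

theorem differentiable_stripPeriodicExtension (hβ : 0 < β) {F : ℂ → E}
    (hc : ContinuousOn F (im ⁻¹' Icc 0 β)) (hd : DifferentiableOn ℂ F (im ⁻¹' Ioo 0 β))
    (hper : ∀ t : ℝ, F (t + β * I) = F t) :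
    Differentiable ℂ (stripPeriodicExtension hβ F) := by
  set G := stripPeriodicExtension hβ F
  have hshift : MapsTo (· + β * I) (im ⁻¹' Icc (-β) 0) (im ⁻¹' Icc 0 β) :=
    fun z ⟨hβz, hz0⟩ => ⟨by rw [im_add_ofReal_mul_I]; linarith, by simpa⟩
  have hcont : ContinuousOn G (im ⁻¹' Icc (-β) β) := by
    rw [← Icc_union_Icc_eq_Icc (by linarith) hβ.le, preimage_union]
    exact (continuousOn_union_iff_of_isClosed (isClosed_Icc.preimage continuous_im)
      (isClosed_Icc.preimage continuous_im)).2
      ⟨(hc.comp (continuous_add_const _).continuousOn hshift).congr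
        (stripPeriodicExtension_eqOn_add hβ hper),
       hc.congr (stripPeriodicExtension_eqOn hβ hper)⟩
  have hdiff : DifferentiableOn ℂ G (im ⁻¹' Ioo (-β) β \ im ⁻¹' {0}) := by
    rintro z ⟨⟨hlo, hhi⟩, hz0 : z.im ≠ 0⟩
    refine DifferentiableAt.differentiableWithinAt ?_
    rcases hz0.lt_or_gt with hneg | hpos
    · have hshifted : (z + β * I).im ∈ Ioo 0 β :=
        ⟨by rw [im_add_ofReal_mul_I]; linarith, by simpa⟩
      have hF : DifferentiableAt ℂ (fun w => F (w + β * I)) z :=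
        (hd.differentiableAt (preimage_im_Ioo_mem_nhds hshifted)).comp z
          (differentiableAt_id.add_const _)
      exact hF.congr_of_eventuallyEq <| Filter.eventuallyEq_of_mem
        (preimage_im_Ioo_mem_nhds ⟨hlo, hneg⟩) fun w hw =>
          stripPeriodicExtension_eqOn_add hβ hper (Ioo_subset_Icc_self hw)
    · exact (hd.differentiableAt (preimage_im_Ioo_mem_nhds ⟨hpos, hhi⟩)).congr_of_eventuallyEq
        (Filter.eventuallyEq_of_mem (preimage_im_Ioo_mem_nhds ⟨hpos, hhi⟩)
          fun w hw => stripPeriodicExtension_eqOn hβ hper (Ioo_subset_Icc_self hw))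
  exact (stripPeriodicExtension_periodic hβ F).differentiable_of_differentiableOn_im_preimage_Ioo
    hβ (differentiableOn_of_differentiableOn_diff_im_preimage (isOpen_Ioo.preimage continuous_im)
      (hcont.mono (preimage_mono Ioo_subset_Icc_self)) hdiff)

theorem apply_eq_apply_of_strip_boundary_periodic (hβ : 0 < β) {F : ℂ → E}
    (hb : IsBounded (F '' (im ⁻¹' Icc 0 β))) (hc : ContinuousOn F (im ⁻¹' Icc 0 β))
    (hd : DifferentiableOn ℂ F (im ⁻¹' Ioo 0 β)) (hper : ∀ t : ℝ, F (t + β * I) = F t)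
    {z w : ℂ} (hz : z ∈ im ⁻¹' Icc 0 β) (hw : w ∈ im ⁻¹' Icc 0 β) :
    F z = F w := by
  rw [← stripPeriodicExtension_eqOn hβ hper hz, ← stripPeriodicExtension_eqOn hβ hper hw]
  exact (differentiable_stripPeriodicExtension hβ hc hd hper).apply_eq_apply_of_bounded
    (hb.subset (range_stripPeriodicExtension_subset hβ F)) z w

end Complex

theorem kms_state_commutative_ground_general
    {A : Type*} [CommRing A] [Algebra ℂ A] [StarRing A]
    (ω : A →ₗ[ℂ] ℂ)
    (α : ℝ → (A ≃⋆ₐ[ℂ] A))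
    (hα0 : ∀ a : A, α 0 a = a)
    (β : ℝ) (hβ : 0 < β)
    (hKMS : ∀ a b : A, ∃ F : ℂ → ℂ,
      (∃ C : ℝ, ∀ z : ℂ, 0 ≤ z.im → z.im ≤ β → ‖F z‖ ≤ C) ∧
      ContinuousOn F {z : ℂ | 0 ≤ z.im ∧ z.im ≤ β} ∧
      DifferentiableOn ℂ F {z : ℂ | 0 < z.im ∧ z.im < β} ∧
      (∀ t : ℝ, F (t : ℂ) = ω (a * α t b)) ∧
      (∀ t : ℝ, F ((t : ℂ) + (β : ℂ) * Complex.I) = ω (α t b * a))) :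
    ∀ (a b : A) (t : ℝ), ω (a * α t b) = ω (a * b) := by
  intro a b t
  obtain ⟨F, ⟨C, hC⟩, hc, hd, hbot, htop⟩ := hKMS a b
  have hb : IsBounded (F '' (im ⁻¹' Icc 0 β)) :=
    isBounded_iff_forall_norm_le.2 ⟨C, by rintro _ ⟨z, hz, rfl⟩; exact hC z hz.1 hz.2⟩
  have hper (s : ℝ) : F (s + β * I) = F s := by rw [htop, hbot, mul_comm]
  have hmem (s : ℝ) : (s : ℂ) ∈ im ⁻¹' Icc 0 β := by simp [hβ.le]
  calc ω (a * α t b) = F t := (hbot t).symm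
    _ = F (0 : ℝ) := apply_eq_apply_of_strip_boundary_periodic hβ hb hc hd hper (hmem t) (hmem 0)
    _ = ω (a * b) := by rw [hbot, hα0]

/-- On a commutative unital complex *-algebra, a β-KMS state satisfies
`ω(A·α_t(B)) = ω(A·B)` for all `A`, `B` and all `t`. -/
theorem kms_state_commutative_ground
    {A : Type*} [CommRing A] [Algebra ℂ A] [StarRing A]
    (ω : A →ₗ[ℂ] ℂ)
    (hω1 : ω 1 = 1)
    (hωpos : ∀ a : A, ∃ r : ℝ, 0 ≤ r ∧ ω (star a * a) = (r : ℂ))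
    (α : ℝ → (A ≃⋆ₐ[ℂ] A))
    (hα0 : ∀ a : A, α 0 a = a)
    (hαadd : ∀ (s t : ℝ) (a : A), α (s + t) a = α s (α t a))
    (β : ℝ) (hβ : 0 < β)
    (hKMS : ∀ a b : A, ∃ F : ℂ → ℂ,
      (∃ C : ℝ, ∀ z : ℂ, 0 ≤ z.im → z.im ≤ β → ‖F z‖ ≤ C) ∧
      ContinuousOn F {z : ℂ | 0 ≤ z.im ∧ z.im ≤ β} ∧
      DifferentiableOn ℂ F {z : ℂ | 0 < z.im ∧ z.im < β} ∧
      (∀ t : ℝ, F (t : ℂ) = ω (a * α t b)) ∧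
      (∀ t : ℝ, F ((t : ℂ) + (β : ℂ) * Complex.I) = ω (α t b * a))) :
    ∀ (a b : A) (t : ℝ), ω (a * α t b) = ω (a * b) :=
  kms_state_commutative_ground_general ω α hα0 β hβ hKMS
end

section
/- Let X be a compact Hausdorff topological space, let Ψ_t, t ∈ ℝ, be a one-parameter group of homeomorphisms of X (Ψ_0 = id and Ψ_{s+t} = Ψ_s ∘ Ψ_t), let X₀ := {x ∈ X : Ψ_t(x) = x for all t ∈ ℝ} be the fixed-point set, and let μ be a regular Borel probability measure on X. Then ∫_X F(x)·(G(Ψ_t(x)) − G(x)) dμ(x) = 0 for all t ∈ ℝ and all continuous functions F, G : X → ℂ if and only if the (closed) support of μ is contained in X₀. -/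
/-!
If `∫ F · (G ∘ f − G) dμ = 0` for all continuous `F`, `G`, then taking `F` to be the conjugate of
`h = G ∘ f − G` gives `∫ |h|² dμ = 0`, so the continuous function `h` vanishes on the support of
`μ`; as continuous functions separate the points of a compact Hausdorff space, `f` fixes the
support pointwise. Conversely, a regular measure is carried by its support, so if `f` fixes the
support the integrand vanishes almost everywhere. Apply this to `f = Ψ t` for each `t`.
-/

open MeasureTheory ComplexConjugate Function

namespace MeasureTheory

lemma Measure.eqOn_support_of_ae_eq {X Y : Type*} [TopologicalSpace X] [MeasurableSpace X]
    [TopologicalSpace Y] [T2Space Y] {μ : Measure X} {f g : X → Y} (hf : Continuous f)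
    (hg : Continuous g) (h : f =ᵐ[μ] g) : Set.EqOn f g μ.support := fun x hx => by
  by_contra hne
  exact Measure.subset_compl_support_of_isOpen (isOpen_ne_fun hf hg) (ae_iff.mp h) hne hx

lemma ae_eq_zero_of_integral_conj_mul_self_eq_zero {Ω : Type*} [MeasurableSpace Ω]
    {μ : Measure Ω} {h : Ω → ℂ} (hint : Integrable (fun x => ‖h x‖ ^ 2) μ)
    (h0 : ∫ x, conj (h x) * h x ∂μ = 0) : h =ᵐ[μ] 0 := by
  have hnorm : ∫ x, ‖h x‖ ^ 2 ∂μ = 0 := by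
    simp_rw [Complex.conj_mul', ← Complex.ofReal_pow, integral_complex_ofReal] at h0
    exact_mod_cast h0
  filter_upwards [(integral_eq_zero_iff_of_nonneg (fun x => by positivity) hint).mp hnorm]
    with x hx
  simpa using hx

section CompactSpace

variable {X : Type*} [TopologicalSpace X] [CompactSpace X] [MeasurableSpace X] [BorelSpace X]
  {μ : Measure X} [IsFiniteMeasure μ] {f : X → X}

lemma ae_comp_eq_of_forall_integral_mul_sub_comp_eq_zero (hf : Continuous f)
    (h : ∀ F G : C(X, ℂ), ∫ x, F x * (G (f x) - G x) ∂μ = 0) (G : C(X, ℂ)) :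
    G ∘ f =ᵐ[μ] G := by
  set H : C(X, ℂ) := G.comp ⟨f, hf⟩ - G
  have hint : Integrable (fun x => ‖H x‖ ^ 2) μ :=
    (by fun_prop : Continuous fun x => ‖H x‖ ^ 2).integrable_of_hasCompactSupport
      (HasCompactSupport.of_compactSpace _)
  filter_upwards [ae_eq_zero_of_integral_conj_mul_self_eq_zero hint (h (star H) G)] with x hx
  exact sub_eq_zero.mp hx

lemma support_subset_fixedPoints_of_forall_integral_mul_sub_comp_eq_zero [T2Space X]
    (hf : Continuous f) (h : ∀ F G : C(X, ℂ), ∫ x, F x * (G (f x) - G x) ∂μ = 0) :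
    μ.support ⊆ fixedPoints f := fun x hx => by
  by_contra hne
  obtain ⟨g, hg, hgx⟩ := separatesPoints_continuous_of_t35Space hne
  let G : C(X, ℂ) := ⟨fun y => g y, Complex.continuous_ofReal.comp hg⟩
  have hGx : G (f x) = G x := Measure.eqOn_support_of_ae_eq (G.continuous.comp hf) G.continuous
    (ae_comp_eq_of_forall_integral_mul_sub_comp_eq_zero hf h G) hx
  exact hgx (Complex.ofReal_injective hGx)

end CompactSpace

lemma integral_mul_sub_comp_eq_zero_of_support_subset_fixedPoints {X : Type*}
    [TopologicalSpace X] [MeasurableSpace X] {μ : Measure X} [μ.Regular] {f : X → X}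
    (hsupp : μ.support ⊆ fixedPoints f) (F G : X → ℂ) :
    ∫ x, F x * (G (f x) - G x) ∂μ = 0 := by
  refine integral_eq_zero_of_ae ?_
  filter_upwards [Measure.support_mem_ae_of_regular] with x hx
  simp [(hsupp hx).eq]

end MeasureTheory

theorem ground_state_iff_support_in_fixed_points_general
    {X : Type*} [TopologicalSpace X] [CompactSpace X] [T2Space X]
    [MeasurableSpace X] [BorelSpace X]
    (Ψ : ℝ → X ≃ₜ X)
    (μ : Measure X) [μ.Regular] :
    (∀ (t : ℝ) (F G : C(X, ℂ)), ∫ x, F x * (G (Ψ t x) - G x) ∂μ = 0) ↔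
      {x : X | ∀ U : Set X, IsOpen U → x ∈ U → 0 < μ U} ⊆
        {x : X | ∀ t : ℝ, Ψ t x = x} := by
  have hsupp : {x : X | ∀ U : Set X, IsOpen U → x ∈ U → 0 < μ U} = μ.support := by
    simp only [Measure.support_eq_forall_isOpen, Imp.swap (a := IsOpen _)]
  rw [hsupp]
  constructor
  · intro h x hx t
    exact support_subset_fixedPoints_of_forall_integral_mul_sub_comp_eq_zero
      (Ψ t).continuous (h t) hx
  · intro h t F G
    exact integral_mul_sub_comp_eq_zero_of_support_subset_fixedPoints
      (fun x hx => h hx t) F G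

/-- For a one-parameter group of homeomorphisms `Ψ_t` of a compact Hausdorff space `X` with
fixed-point set `X₀`, and a regular Borel probability measure `μ`, the ground-state condition
`∫ F·(G∘Ψ_t − G) dμ = 0` for all continuous `F`, `G` and all `t` holds if and only if the
support of `μ` (the set of points all of whose open neighbourhoods have positive measure) is
contained in `X₀`. -/
theorem ground_state_iff_support_in_fixed_points
    {X : Type*} [TopologicalSpace X] [CompactSpace X] [T2Space X]
    [MeasurableSpace X] [BorelSpace X]
    (Ψ : ℝ → X ≃ₜ X)
    (hΨ0 : ∀ x : X, Ψ 0 x = x)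
    (hΨadd : ∀ (s t : ℝ) (x : X), Ψ (s + t) x = Ψ s (Ψ t x))
    (μ : Measure X) [IsProbabilityMeasure μ] [μ.Regular] :
    (∀ (t : ℝ) (F G : C(X, ℂ)), ∫ x, F x * (G (Ψ t x) - G x) ∂μ = 0) ↔
      {x : X | ∀ U : Set X, IsOpen U → x ∈ U → 0 < μ U} ⊆
        {x : X | ∀ t : ℝ, Ψ t x = x} :=
  ground_state_iff_support_in_fixed_points_general Ψ μ
end

section
/- Let F₊ : ℂ → ℂ be bounded and continuous on the closed upper half-plane {z : Im z ≥ 0} and holomorphic on the open upper half-plane {z : Im z > 0}, and let F₋ : ℂ → ℂ be bounded and continuous on the closed lower half-plane {z : Im z ≤ 0} and holomorphic on the open lower half-plane {z : Im z < 0}. If F₊(t) = F₋(t) for all t ∈ ℝ, then there is a constant c ∈ ℂ such that F₊ = c on the closed upper half-plane and F₋ = c on the closed lower half-plane; in particular F₊(t) = F₊(0) for all t ∈ ℝ. -/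
/-!
Glue `F₊` and `F₋` along the real axis into one continuous function `G` on `ℂ`. Cutting any
rectangle along the real axis leaves two rectangles, each in a closed half-plane where Cauchy's
theorem applies, so the integral of `G` over every rectangle vanishes. By Morera's theorem `G` is
entire, and being bounded it is constant by Liouville's theorem.
-/

open Complex Set

namespace Complex

variable {E : Type*} [NormedAddCommGroup E] [NormedSpace ℂ E] {f : ℂ → E}

theorem IsConservativeOn.of_continuousOn_of_differentiableOn_interior {s : Set ℂ}
    (hc : ContinuousOn f s) (hd : DifferentiableOn ℂ f (interior s)) :
    IsConservativeOn f s := by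
  intro z w hzw
  rw [← add_eq_zero_iff_eq_neg, wedgeIntegral_add_wedgeIntegral_eq]
  refine integral_boundary_rect_eq_zero_of_continuousOn_of_differentiableOn f z w (hc.mono hzw)
    (hd.mono (interior_maximal (Subset.trans ?_ hzw) (isOpen_Ioo.reProdIm isOpen_Ioo)))
  exact reProdIm_subset_iff'.2 (Or.inl ⟨Ioo_subset_Icc_self, Ioo_subset_Icc_self⟩)

theorem wedgeIntegral_add_wedgeIntegral_eq_of_cut (hf : Continuous f) (z w : ℂ) (c : ℝ) :
    wedgeIntegral z w f + wedgeIntegral w z f =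
      (wedgeIntegral z ⟨w.re, c⟩ f + wedgeIntegral ⟨w.re, c⟩ z f) +
        (wedgeIntegral ⟨z.re, c⟩ w f + wedgeIntegral w ⟨z.re, c⟩ f) := by
  have hvert (x a b : ℝ) :
      IntervalIntegrable (fun y : ℝ => f (x + y * I)) MeasureTheory.volume a b :=
    (hf.comp (by fun_prop)).intervalIntegrable a b
  simp only [wedgeIntegral_add_wedgeIntegral_eq]
  rw [← intervalIntegral.integral_add_adjacent_intervals (hvert w.re z.im c) (hvert w.re c w.im),
    ← intervalIntegral.integral_add_adjacent_intervals (hvert z.re z.im c) (hvert z.re c w.im)]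
  simp only [smul_add]
  abel

theorem rectangle_subset_setOf_le_im {z w : ℂ} {c : ℝ} (hz : c ≤ z.im) (hw : c ≤ w.im) :
    Rectangle z w ⊆ {p | c ≤ p.im} :=
  fun _ hp => (le_min hz hw).trans hp.2.1

theorem rectangle_subset_setOf_im_le {z w : ℂ} {c : ℝ} (hz : z.im ≤ c) (hw : w.im ≤ c) :
    Rectangle z w ⊆ {p | p.im ≤ c} :=
  fun _ hp => hp.2.2.trans (max_le hz hw)

theorem IsConservativeOn.univ_of_halfPlanes (hf : Continuous f) (c : ℝ)
    (hu : IsConservativeOn f {z | c ≤ z.im}) (hl : IsConservativeOn f {z | z.im ≤ c}) :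
    IsConservativeOn f univ := by
  have hcut (p q : ℂ) (hq : q.im = c) : wedgeIntegral p q f + wedgeIntegral q p f = 0 := by
    rw [add_eq_zero_iff_eq_neg]
    rcases le_total c p.im with hp | hp
    · exact hu p q (rectangle_subset_setOf_le_im hp hq.ge)
    · exact hl p q (rectangle_subset_setOf_im_le hp hq.le)
  intro z w _
  rw [← add_eq_zero_iff_eq_neg, wedgeIntegral_add_wedgeIntegral_eq_of_cut hf z w c,
    hcut z _ rfl, add_comm (wedgeIntegral _ w f), hcut w _ rfl, add_zero]

theorem differentiable_of_continuous_of_differentiableOn_halfPlanes [CompleteSpace E] (c : ℝ)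
    (hf : Continuous f) (hu : DifferentiableOn ℂ f {z | c < z.im})
    (hl : DifferentiableOn ℂ f {z | z.im < c}) : Differentiable ℂ f := by
  have hcons : IsConservativeOn f univ :=
    .univ_of_halfPlanes hf c
      (.of_continuousOn_of_differentiableOn_interior hf.continuousOn
        (by rwa [interior_setOfPred_le_im]))
      (.of_continuousOn_of_differentiableOn_interior hf.continuousOn
        (by rwa [interior_setOfPred_im_le]))
  exact differentiableOn_univ.1 <|
    (isConservativeOn_and_continuousOn_iff_isDifferentiableOn isOpen_univ).1 ⟨hcons, hf.continuousOn⟩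

end Complex

/-- Edge-of-the-wedge/Liouville step: if `F₊` is bounded, continuous on the closed upper
half-plane and holomorphic on the open upper half-plane, `F₋` is bounded, continuous on the
closed lower half-plane and holomorphic on the open lower half-plane, and they agree on the
real axis, then both are equal to a single constant; in particular `F₊(t) = F₊(0)` for real `t`. -/
theorem upper_lower_halfplane_agree_constant (Fp Fm : ℂ → ℂ)
    (hpbdd : ∃ C : ℝ, ∀ z : ℂ, 0 ≤ z.im → ‖Fp z‖ ≤ C)
    (hpcont : ContinuousOn Fp {z : ℂ | 0 ≤ z.im})
    (hpholo : DifferentiableOn ℂ Fp {z : ℂ | 0 < z.im})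
    (hmbdd : ∃ C : ℝ, ∀ z : ℂ, z.im ≤ 0 → ‖Fm z‖ ≤ C)
    (hmcont : ContinuousOn Fm {z : ℂ | z.im ≤ 0})
    (hmholo : DifferentiableOn ℂ Fm {z : ℂ | z.im < 0})
    (hagree : ∀ t : ℝ, Fp (t : ℂ) = Fm (t : ℂ)) :
    ∃ c : ℂ, (∀ z : ℂ, 0 ≤ z.im → Fp z = c) ∧ (∀ z : ℂ, z.im ≤ 0 → Fm z = c) ∧
      ∀ t : ℝ, Fp (t : ℂ) = Fp (0 : ℂ) := by
  have hreal (z : ℂ) (hz : 0 = z.im) : Fp z = Fm z := by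
    have hz' : (z.re : ℂ) = z := Complex.ext rfl (by simp [hz])
    exact hz' ▸ hagree z.re
  set G : ℂ → ℂ := fun z => if 0 ≤ z.im then Fp z else Fm z
  have hGp (z : ℂ) (hz : 0 ≤ z.im) : G z = Fp z := if_pos hz
  have hGm (z : ℂ) (hz : z.im ≤ 0) : G z = Fm z := by
    rcases hz.lt_or_eq with hz | hz
    · exact if_neg hz.not_ge
    · rw [hGp z hz.ge, hreal z hz.symm]
  have hG : Differentiable ℂ G :=
    differentiable_of_continuous_of_differentiableOn_halfPlanes 0
      (continuous_if_le continuous_const continuous_im hpcont hmcont hreal)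
      (hpholo.congr fun z hz => hGp z hz.le) (hmholo.congr fun z hz => hGm z hz.le)
  obtain ⟨C₁, hC₁⟩ := hpbdd
  obtain ⟨C₂, hC₂⟩ := hmbdd
  have hbdd : Bornology.IsBounded (range G) := by
    refine isBounded_iff_forall_norm_le.2 ⟨max C₁ C₂, forall_mem_range.2 fun z => ?_⟩
    rcases le_total 0 z.im with h | h
    · exact hGp z h ▸ (hC₁ z h).trans (le_max_left _ _)
    · exact hGm z h ▸ (hC₂ z h).trans (le_max_right _ _)
  obtain ⟨c, hc⟩ := hG.exists_const_forall_eq_of_bounded hbdd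
  refine ⟨c, fun z hz => hGp z hz ▸ hc z, fun z hz => hGm z hz ▸ hc z, fun t => ?_⟩
  rw [← hGp t (by simp), ← hGp 0 le_rfl, hc, hc]
end

section
/- Let F : ℂ → ℂ be bounded and continuous on the closed upper half-plane {z : Im z ≥ 0}, holomorphic on the open upper half-plane {z : Im z > 0}, and real-valued on the real axis (F(t) ∈ ℝ for all t ∈ ℝ). Then F is constant on the closed upper half-plane. -/
/-!
Both `exp (I * F)` and `exp (-I * F)` are bounded on the upper half-plane and have modulus one on
the real axis, so by the Phragmén–Lindelöf principle their moduli `exp (∓ Im F)` are at most one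
throughout, i.e. `F` is real-valued on the closed upper half-plane. By the open mapping theorem a
real-valued holomorphic function on the connected open half-plane is constant, and continuity
carries the constant to the boundary.
-/

open Complex Set Filter

namespace PhragmenLindelof

variable {E : Type*} [NormedAddCommGroup E] [NormedSpace ℂ E]

theorem upper_half_plane_of_bounded {f : ℂ → E} {B C : ℝ}
    (hd : DiffContOnCl ℂ f {z | 0 < z.im}) (hB : ∀ z, 0 < z.im → ‖f z‖ ≤ B)
    (hreal : ∀ t : ℝ, ‖f t‖ ≤ C) {z : ℂ} (hz : 0 ≤ z.im) : ‖f z‖ ≤ C := by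
  have hrot : DiffContOnCl ℂ (fun w => f (I * w)) {w | 0 < w.re} :=
    hd.comp (differentiable_id.const_mul I).diffContOnCl fun w hw => by simpa using hw
  have hbound : ∀ w : ℂ, 0 < w.re → ‖f (I * w)‖ ≤ B := fun w hw => hB _ (by simpa using hw)
  have hrot_le : ‖f (I * (-I * z))‖ ≤ C :=
    right_half_plane_of_bounded_on_real (f := fun w => f (I * w)) hrot ?_ ?_ (fun x => ?_)
      (by simpa using hz)
  · simpa [← mul_assoc] using hrot_le
  · refine ⟨0, two_pos, 0, Asymptotics.IsBigO.of_bound B ?_⟩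
    exact eventually_inf_principal.2 (.of_forall fun w hw => by simpa using hbound w hw)
  · refine isBoundedUnder_of_eventually_le (a := B) ?_
    filter_upwards [eventually_gt_atTop (0 : ℝ)] with x hx
    exact hbound x (by simpa using hx)
  · simpa [mul_left_comm I, ← ofReal_neg] using hreal (-x)

theorem upper_half_plane_re_le_of_bounded {g : ℂ → ℂ} {B c : ℝ}
    (hd : DiffContOnCl ℂ g {z | 0 < z.im}) (hB : ∀ z, 0 < z.im → (g z).re ≤ B)
    (hreal : ∀ t : ℝ, (g t).re ≤ c) {z : ℂ} (hz : 0 ≤ z.im) : (g z).re ≤ c := by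
  have hexp : ‖exp (g z)‖ ≤ Real.exp c :=
    upper_half_plane_of_bounded (f := fun z => exp (g z)) (B := Real.exp B)
      ⟨hd.1.cexp, hd.2.cexp⟩
      (fun w hw => by simpa [norm_exp] using hB w hw)
      (fun t => by simpa [norm_exp] using hreal t) hz
  simpa [norm_exp] using hexp

theorem upper_half_plane_im_eq_zero {f : ℂ → ℂ} {C : ℝ}
    (hd : DiffContOnCl ℂ f {z | 0 < z.im}) (hC : ∀ z, 0 < z.im → ‖f z‖ ≤ C)
    (hreal : ∀ t : ℝ, (f t).im = 0) {z : ℂ} (hz : 0 ≤ z.im) : (f z).im = 0 := by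
  have him_le (w : ℂ) (hw : 0 < w.im) : |(f w).im| ≤ C := (abs_im_le_norm _).trans (hC w hw)
  have hle : (I * f z).re ≤ 0 :=
    upper_half_plane_re_le_of_bounded (B := C) (hd.const_smul I)
      (fun w hw => by simpa using neg_le.1 (neg_le_of_abs_le (him_le w hw)))
      (fun t => by simp [hreal t]) hz
  have hge : (-I * f z).re ≤ 0 :=
    upper_half_plane_re_le_of_bounded (B := C) (hd.const_smul (-I))
      (fun w hw => by simpa using le_of_abs_le (him_le w hw)) (fun t => by simp [hreal t]) hz
  simp only [mul_re, I_re, I_im, neg_re, neg_im] at hle hge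
  linarith

end PhragmenLindelof

open PhragmenLindelof in
/-- Schwarz reflection/Liouville step: a function bounded and continuous on the closed upper
half-plane, holomorphic on the open upper half-plane, and real-valued on the real axis, is
constant on the closed upper half-plane. -/
theorem upper_halfplane_real_boundary_constant (F : ℂ → ℂ)
    (hbdd : ∃ C : ℝ, ∀ z : ℂ, 0 ≤ z.im → ‖F z‖ ≤ C)
    (hcont : ContinuousOn F {z : ℂ | 0 ≤ z.im})
    (hholo : DifferentiableOn ℂ F {z : ℂ | 0 < z.im})
    (hreal : ∀ t : ℝ, (F (t : ℂ)).im = 0) :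
    ∃ c : ℂ, ∀ z : ℂ, 0 ≤ z.im → F z = c := by
  obtain ⟨C, hC⟩ := hbdd
  have hopen : IsOpen {z : ℂ | 0 < z.im} := isOpen_lt continuous_const continuous_im
  have hd : DiffContOnCl ℂ F {z | 0 < z.im} := ⟨hholo, by rwa [closure_setOfPred_lt_im]⟩
  have him (z : ℂ) (hz : 0 < z.im) : (F z).im = 0 :=
    upper_half_plane_im_eq_zero hd (fun w hw => hC w hw.le) hreal hz.le
  obtain ⟨c, hc⟩ := (hholo.analyticOnNhd hopen).eq_const_of_im_eq_const him hopen
    ⟨⟨I, by simp⟩, (convex_halfSpace_im_gt 0).isPreconnected⟩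
  exact ⟨c, fun z hz => Set.EqOn.of_subset_closure hc hcont continuousOn_const
    (ofPred_subset_ofPred.2 fun _ => le_of_lt) (by simp) hz⟩
end

section
/- Let β > 0 and let F : ℂ → ℂ be bounded and continuous on the closed strip S̄_β = {z ∈ ℂ : 0 ≤ Im z ≤ β}, holomorphic on the open strip S_β = {z : 0 < Im z < β}, and real-valued on both boundary lines: F(t) ∈ ℝ and F(t + iβ) ∈ ℝ for all t ∈ ℝ. Then F is constant on S̄_β. -/
/-!
Phragmén–Lindelöf applied to `exp (± i F)`, whose modulus `exp (∓ Im F)` is bounded on the strip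
and at most `1` on its boundary, shows `Im F = 0` on the closed strip. A holomorphic function with
real values on a connected open set is constant by the open mapping theorem, and continuity carries
the constant to the boundary lines.
-/

open Set Complex

theorem Complex.norm_exp_I_mul (w : ℂ) : ‖exp (I * w)‖ = Real.exp (-w.im) := by
  simp [norm_exp]

theorem Complex.im_nonneg_of_diffContOnCl_strip {a b : ℝ} (hab : a < b) {f : ℂ → ℂ}
    (hfd : DiffContOnCl ℂ f (im ⁻¹' Ioo a b))
    (hbdd : BddBelow ((fun z => (f z).im) '' (im ⁻¹' Ioo a b)))
    (ha : ∀ z : ℂ, z.im = a → 0 ≤ (f z).im) (hb : ∀ z : ℂ, z.im = b → 0 ≤ (f z).im)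
    {z : ℂ} (hza : a ≤ z.im) (hzb : z.im ≤ b) : 0 ≤ (f z).im := by
  obtain ⟨m, hm⟩ := hbdd
  have hle_one : ∀ w, ‖exp (I * f w)‖ ≤ 1 ↔ 0 ≤ (f w).im := fun w => by
    rw [norm_exp_I_mul, Real.exp_le_one_iff, neg_nonpos]
  have hgrowth : ∃ c < Real.pi / (b - a), ∃ B,
      (fun w => exp (I * f w)) =O[Filter.comap (_root_.abs ∘ re) Filter.atTop ⊓
        Filter.principal (im ⁻¹' Ioo a b)] fun w => Real.exp (B * Real.exp (c * |w.re|)) := by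
    refine ⟨0, div_pos Real.pi_pos (sub_pos.2 hab), -m, Asymptotics.IsBigO.of_bound 1 ?_⟩
    refine Filter.eventually_inf_principal.2 (Filter.Eventually.of_forall fun w hw => ?_)
    simpa [norm_exp_I_mul] using hm (mem_image_of_mem _ hw)
  rw [← hle_one]
  exact PhragmenLindelof.horizontal_strip (f := fun w => exp (I * f w))
    (Differentiable.comp_diffContOnCl (f := fun w => exp (I * w)) (by fun_prop) hfd) hgrowth
    (fun w hw => (hle_one w).2 (ha w hw)) (fun w hw => (hle_one w).2 (hb w hw)) hza hzb

theorem Complex.im_eq_zero_of_diffContOnCl_strip {a b : ℝ} (hab : a < b) {f : ℂ → ℂ}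
    (hfd : DiffContOnCl ℂ f (im ⁻¹' Ioo a b))
    (hbdd : ∃ C, ∀ z ∈ im ⁻¹' Ioo a b, |(f z).im| ≤ C)
    (ha : ∀ z : ℂ, z.im = a → (f z).im = 0) (hb : ∀ z : ℂ, z.im = b → (f z).im = 0)
    {z : ℂ} (hza : a ≤ z.im) (hzb : z.im ≤ b) : (f z).im = 0 := by
  obtain ⟨C, hC⟩ := hbdd
  have hF_nonneg := im_nonneg_of_diffContOnCl_strip hab hfd
    ⟨-C, forall_mem_image.2 fun w hw => neg_le_of_abs_le (hC w hw)⟩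
    (fun w hw => (ha w hw).ge) (fun w hw => (hb w hw).ge) hza hzb
  have hnegF_nonneg := im_nonneg_of_diffContOnCl_strip hab hfd.neg
    ⟨-C, forall_mem_image.2 fun w hw => by simpa using (abs_le.1 (hC w hw)).2⟩
    (fun w hw => by simp [ha w hw]) (fun w hw => by simp [hb w hw]) hza hzb
  simp only [Pi.neg_apply, neg_im, neg_nonneg] at hnegF_nonneg
  exact le_antisymm hnegF_nonneg hF_nonneg

theorem DifferentiableOn.exists_eq_const_of_im_eq_zero {f : ℂ → ℂ} {U : Set ℂ}
    (hf : DifferentiableOn ℂ f U) (hU : IsOpen U) (hUc : IsPreconnected U)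
    (hreal : ∀ z ∈ U, (f z).im = 0) : ∃ c, ∀ z ∈ U, f z = c := by
  rcases (hf.analyticOnNhd hU).is_constant_or_isOpen hUc with hconst | hopen
  · exact hconst
  · have hU_empty : f '' U ⊆ interior (im ⁻¹' {0}) :=
      interior_maximal (image_subset_iff.2 hreal) (hopen U le_rfl hU)
    rw [interior_preimage_im, interior_singleton, preimage_empty, subset_empty_iff,
      image_eq_empty] at hU_empty
    exact ⟨0, by simp [hU_empty]⟩

/-- Repeated Schwarz reflection/Liouville step: a function bounded and continuous on the closed
strip `0 ≤ Im z ≤ β`, holomorphic on the open strip, and real-valued on both boundary lines,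
is constant on the closed strip. -/
theorem strip_real_boundaries_constant (β : ℝ) (hβ : 0 < β) (F : ℂ → ℂ)
    (hbdd : ∃ C : ℝ, ∀ z : ℂ, 0 ≤ z.im → z.im ≤ β → ‖F z‖ ≤ C)
    (hcont : ContinuousOn F {z : ℂ | 0 ≤ z.im ∧ z.im ≤ β})
    (hholo : DifferentiableOn ℂ F {z : ℂ | 0 < z.im ∧ z.im < β})
    (hreal0 : ∀ t : ℝ, (F (t : ℂ)).im = 0)
    (hrealβ : ∀ t : ℝ, (F ((t : ℂ) + (β : ℂ) * Complex.I)).im = 0) :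
    ∃ c : ℂ, ∀ z : ℂ, 0 ≤ z.im → z.im ≤ β → F z = c := by
  set S : Set ℂ := im ⁻¹' Ioo 0 β
  have hclosure : closure S = {z : ℂ | 0 ≤ z.im ∧ z.im ≤ β} := by
    rw [closure_preimage_im, closure_Ioo hβ.ne]; rfl
  have hF : DiffContOnCl ℂ F S := ⟨hholo, hclosure ▸ hcont⟩
  obtain ⟨C, hC⟩ := hbdd
  have him : ∀ z : ℂ, 0 ≤ z.im → z.im ≤ β → (F z).im = 0 := fun z h0 hb =>
    im_eq_zero_of_diffContOnCl_strip hβ hF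
      ⟨C, fun w hw => (abs_im_le_norm _).trans (hC w hw.1.le hw.2.le)⟩
      (fun w hw => by
        rw [show w = w.re by apply Complex.ext <;> simp [hw]]; exact hreal0 w.re)
      (fun w hw => by
        rw [show w = w.re + β * I by apply Complex.ext <;> simp [hw]]; exact hrealβ w.re)
      h0 hb
  obtain ⟨c, hc⟩ := hholo.exists_eq_const_of_im_eq_zero (isOpen_Ioo.preimage continuous_im)
    ((convex_Ioo 0 β).linear_preimage imLm).isPreconnected fun z hz => him z hz.1.le hz.2.le
  exact ⟨c, fun z h0 hb => EqOn.of_subset_closure hc hcont continuousOn_const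
    (fun w hw => ⟨hw.1.le, hw.2.le⟩) hclosure.ge ⟨h0, hb⟩⟩
end
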